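/- arXiv:1812.06033 — 2 statements merged into one kernel-verified Lean document; each statement's English description precedes it below -/
import Mathlib

section
/- For every prime power q and all partitions λ, μ, ν, the Hall numbers satisfy g^λ_{μ,ν} = g^λ_{ν,μ}; that is, the number of k[X]-submodules N ⊆ I_λ with N ≅ I_ν and I_λ/N ≅ I_μ equals the number of k[X]-submodules M ⊆ I_λ with M ≅ I_μ and I_λ/M ≅ I_ν. -/
open scoped BigOperators

/-- A partition: a weakly decreasing, finitely supported sequence of
nonnegative integers, indexed from `0` (so `parts 0` is `λ₁`). -/
structure Ptn where
  parts : ℕ → ℕ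
  antitone' : Antitone parts
  exists_zero : ∃ N, parts N = 0

namespace Ptn

/-- `|λ| = Σᵢ λᵢ`. -/
noncomputable def size (l : Ptn) : ℕ := ∑ᶠ j, l.parts j

/-- `ℓ(λ)`, the number of nonzero parts. -/
noncomputable def len (l : Ptn) : ℕ := Set.ncard {j | l.parts j ≠ 0}

/-- `n(λ) = Σᵢ (i-1) λᵢ` (with 1-based `i`). -/
noncomputable def nstat (l : Ptn) : ℕ := ∑ᶠ j, j * l.parts j

/-- `λ'ᵢ = #{j : λⱼ ≥ i}`, the transpose partition (meaningful for `i ≥ 1`). -/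
noncomputable def conj (l : Ptn) (i : ℕ) : ℕ := Set.ncard {j | i ≤ l.parts j}

/-- `mᵢ(λ) = #{j : λⱼ = i}` (meaningful for `i ≥ 1`). -/
noncomputable def mult (l : Ptn) (i : ℕ) : ℕ := Set.ncard {j | l.parts j = i}

/-- The partition `(1^n)`. -/
def onePow (n : ℕ) : Ptn where
  parts := fun j => if j < n then 1 else 0
  antitone' := by
    intro a b hab
    simp only
    split_ifs <;> omega
  exists_zero := ⟨n, by simp⟩

/-- The one-row partition `(n)`. -/
def single (n : ℕ) : Ptn where
  parts := fun j => if j = 0 then n else 0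
  antitone' := by
    intro a b hab
    simp only
    split_ifs <;> omega
  exists_zero := ⟨n + 1, by simp⟩

/-- The empty partition. -/
def empty : Ptn := onePow 0

end Ptn

/-- The q-Pochhammer symbol `(x;t)_n = ∏_{i=1}^n (1 - x t^{i-1})`. -/
def qPoch {K : Type*} [CommRing K] (x t : K) (n : ℕ) : K :=
  ∏ i ∈ Finset.range n, (1 - x * t ^ i)

/-- The Gaussian binomial coefficient `[n choose r]_t`, zero for `r > n`. -/
noncomputable def qBinom {K : Type*} [Field K] (t : K) (n r : ℕ) : K :=
  if r ≤ n then qPoch t t n / (qPoch t t r * qPoch t t (n - r)) else 0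

/-- The Gaussian binomial coefficient with integer arguments,
zero outside `0 ≤ r ≤ n`. -/
noncomputable def qBinomZ {K : Type*} [Field K] (t : K) (n r : ℤ) : K :=
  if 0 ≤ r ∧ r ≤ n then
    qPoch t t n.toNat / (qPoch t t r.toNat * qPoch t t (n - r).toNat)
  else 0

/-- `I_λ = ⊕ᵢ k[X]/(X^{λᵢ})`, a module over `k[X]` on which `X` acts nilpotently. -/
def Imod (k : Type*) [Field k] (l : Ptn) : Type _ :=
  ∀ i : Fin l.len, Polynomial k ⧸ Ideal.span {(Polynomial.X : Polynomial k) ^ l.parts (i : ℕ)}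

noncomputable instance (k : Type*) [Field k] (l : Ptn) : AddCommGroup (Imod k l) :=
  inferInstanceAs (AddCommGroup
    (∀ i : Fin l.len, Polynomial k ⧸ Ideal.span {(Polynomial.X : Polynomial k) ^ l.parts (i : ℕ)}))

noncomputable instance (k : Type*) [Field k] (l : Ptn) : Module (Polynomial k) (Imod k l) :=
  inferInstanceAs (Module (Polynomial k)
    (∀ i : Fin l.len, Polynomial k ⧸ Ideal.span {(Polynomial.X : Polynomial k) ^ l.parts (i : ℕ)}))

/-- The Hall number `g^λ_{μ,ν}`: the number of `k[X]`-submodules `N ⊆ I_λ` with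
`N ≅ I_ν` and `I_λ/N ≅ I_μ`. -/
noncomputable def hallNum (k : Type*) [Field k] (l m n : Ptn) : ℕ :=
  Nat.card {N : Submodule (Polynomial k) (Imod k l) //
    Nonempty ((↥N) ≃ₗ[Polynomial k] Imod k n) ∧
    Nonempty ((Imod k l ⧸ N) ≃ₗ[Polynomial k] Imod k m)}

/-- `a_λ`, the number of `k[X]`-module automorphisms of `I_λ`. -/
noncomputable def aut (k : Type*) [Field k] (l : Ptn) : ℕ :=
  Nat.card (Imod k l ≃ₗ[Polynomial k] Imod k l)

/-!
The map `N ↦ N^⊥`, sending a submodule of `I_λ` to its annihilator in the `k`-dual, exchanges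
subobjects and quotients: `N^⊥ ≅ (I_λ / N)^*` and `I_λ^* / N^⊥ ≅ N^*`. Every `I_λ` is self-dual
as a `k[X]`-module, because `k[X]/(X^a)` is, through the pairing `(p, r) ↦ [X^{a-1}] (p r)`.
Transporting `N^⊥` back into `I_λ` therefore injects submodules of cotype `μ` and type `ν` into
those of cotype `ν` and type `μ`, and vice versa; Schröder–Bernstein matches the two sets.
-/

open Polynomial Module

section DualModule

variable {k : Type*} [CommRing k] {M : Type*} [AddCommGroup M] [Module k M]
  [Module k[X] M] [IsScalarTower k k[X] M]

noncomputable instance Module.Dual.instModulePolynomial : Module k[X] (Dual k M) where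
  smul p φ := φ ∘ₗ (LinearMap.lsmul k[X] M p).restrictScalars k
  one_smul φ := by ext m; exact congrArg φ (one_smul k[X] m)
  mul_smul p q φ := by ext m; exact congrArg φ (by rw [mul_comm]; exact mul_smul q p m)
  smul_zero p := rfl
  smul_add p φ ψ := rfl
  add_smul p q φ := by ext m; exact (congrArg φ (add_smul p q m)).trans (φ.map_add _ _)
  zero_smul φ := by ext m; exact (congrArg φ (zero_smul k[X] m)).trans φ.map_zero

theorem Module.Dual.polynomial_smul_apply (p : k[X]) (φ : Dual k M) (m : M) :
    (p • φ) m = φ (p • m) := rfl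

instance : IsScalarTower k k[X] (Dual k M) :=
  ⟨fun c p φ => by ext m; simp [Dual.polynomial_smul_apply]⟩

noncomputable def LinearEquiv.polyDualMap {A B : Type*}
    [AddCommGroup A] [Module k A] [Module k[X] A] [IsScalarTower k k[X] A]
    [AddCommGroup B] [Module k B] [Module k[X] B] [IsScalarTower k k[X] B]
    (e : A ≃ₗ[k[X]] B) : Dual k B ≃ₗ[k[X]] Dual k A :=
  { (e.restrictScalars k).dualMap with
    map_smul' := fun p φ => by ext a; exact congrArg φ (e.map_smul p a).symm }

noncomputable def Module.piDualEquivDualPi {ι : Type*} [Fintype ι] [DecidableEq ι]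
    (A : ι → Type*) [∀ i, AddCommGroup (A i)] [∀ i, Module k (A i)]
    [∀ i, Module k[X] (A i)] [∀ i, IsScalarTower k k[X] (A i)] :
    (∀ i, Dual k (A i)) ≃ₗ[k[X]] Dual k (∀ i, A i) :=
  { LinearMap.lsum k A k with
    map_smul' := fun p f => by ext i v; simp [Dual.polynomial_smul_apply] }

namespace Submodule

noncomputable def polyDualAnnihilator (N : Submodule k[X] M) : Submodule k[X] (Dual k M) where
  toAddSubmonoid := (N.restrictScalars k).dualAnnihilator.toAddSubmonoid
  smul_mem' p _ hφ := (mem_dualAnnihilator _).2 fun m hm =>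
    (mem_dualAnnihilator _).1 hφ (p • m) (N.smul_mem p hm)

noncomputable def dualQuotEquivPolyDualAnnihilator (N : Submodule k[X] M) :
    Dual k (M ⧸ N) ≃ₗ[k[X]] N.polyDualAnnihilator :=
  { (Quotient.restrictScalarsEquiv k N).dualMap.trans
      (N.restrictScalars k).dualQuotEquivDualAnnihilator with
    map_smul' := fun _ _ => rfl }

end Submodule

end DualModule

namespace Submodule

variable {k : Type*} [Field k] {M : Type*} [AddCommGroup M] [Module k M]
  [Module k[X] M] [IsScalarTower k k[X] M]

theorem polyDualAnnihilator_injective :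
    Function.Injective (polyDualAnnihilator : Submodule k[X] M → Submodule k[X] (Dual k M)) :=
  fun _ _ h => restrictScalars_injective k _ _ <|
    Subspace.dualAnnihilator_inj.1 (congrArg (restrictScalars k) h)

noncomputable def quotPolyDualAnnihilatorEquiv (N : Submodule k[X] M) :
    (Dual k M ⧸ N.polyDualAnnihilator) ≃ₗ[k[X]] Dual k N :=
  { (Quotient.restrictScalarsEquiv k N.polyDualAnnihilator).symm.trans
      (Subspace.quotAnnihilatorEquiv (N.restrictScalars k)) with
    map_smul' := fun p φ => by
      induction φ using Quotient.induction_on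
      rfl }

variable (e : Dual k M ≃ₗ[k[X]] M)

noncomputable def perp (N : Submodule k[X] M) : Submodule k[X] M :=
  N.polyDualAnnihilator.map e.toLinearMap

theorem perp_injective : Function.Injective (perp e) :=
  (map_injective_of_injective e.injective).comp polyDualAnnihilator_injective

variable {A B : Type*} [AddCommGroup A] [Module k A] [Module k[X] A] [IsScalarTower k k[X] A]
  [AddCommGroup B] [Module k B] [Module k[X] B] [IsScalarTower k k[X] B]

theorem nonempty_perp_equiv {N : Submodule k[X] M} (eA : Dual k A ≃ₗ[k[X]] A)
    (hN : Nonempty ((M ⧸ N) ≃ₗ[k[X]] A)) : Nonempty (N.perp e ≃ₗ[k[X]] A) :=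
  hN.map fun f => (e.submoduleMap _).symm ≪≫ₗ (dualQuotEquivPolyDualAnnihilator N).symm ≪≫ₗ
    f.symm.polyDualMap ≪≫ₗ eA

theorem nonempty_quotient_perp_equiv {N : Submodule k[X] M} (eB : Dual k B ≃ₗ[k[X]] B)
    (hN : Nonempty (N ≃ₗ[k[X]] B)) : Nonempty ((M ⧸ N.perp e) ≃ₗ[k[X]] B) :=
  hN.map fun f => (Quotient.equiv _ _ e rfl).symm ≪≫ₗ quotPolyDualAnnihilatorEquiv N ≪≫ₗ
    f.symm.polyDualMap ≪≫ₗ eB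

noncomputable def perpEmbedding (eA : Dual k A ≃ₗ[k[X]] A) (eB : Dual k B ≃ₗ[k[X]] B) :
    {N : Submodule k[X] M // Nonempty (N ≃ₗ[k[X]] B) ∧ Nonempty ((M ⧸ N) ≃ₗ[k[X]] A)} ↪
      {N : Submodule k[X] M // Nonempty (N ≃ₗ[k[X]] A) ∧ Nonempty ((M ⧸ N) ≃ₗ[k[X]] B)} where
  toFun N := ⟨N.1.perp e, nonempty_perp_equiv e eA N.2.2, nonempty_quotient_perp_equiv e eB N.2.1⟩
  inj' _ _ h := Subtype.ext (perp_injective e (congrArg Subtype.val h))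

end Submodule

section TruncatedPolynomial

abbrev TruncPoly (k : Type*) [Field k] (a : ℕ) := k[X] ⧸ Ideal.span {(X : k[X]) ^ a}

variable {k : Type*} [Field k] {a : ℕ}

instance : FiniteDimensional k (TruncPoly k a) := (monic_X_pow a).finite_quotient

noncomputable def topCoeff (ha : 0 < a) : Dual k (TruncPoly k a) :=
  ((Ideal.span {(X : k[X]) ^ a}).restrictScalars k).liftQ (lcoeff k (a - 1)) fun p hp => by
    obtain ⟨q, rfl⟩ := Ideal.mem_span_singleton'.1 hp
    rw [LinearMap.mem_ker, lcoeff_apply, coeff_mul_X_pow', if_neg (by omega)]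

theorem smul_topCoeff_mk (ha : 0 < a) (p r : k[X]) :
    (p • topCoeff ha) (Ideal.Quotient.mk _ r) = (p * r).coeff (a - 1) := rfl

noncomputable def truncPolyDualityMap (ha : 0 < a) :
    TruncPoly k a →ₗ[k[X]] Dual k (TruncPoly k a) :=
  (Ideal.span {(X : k[X]) ^ a}).liftQ (LinearMap.toSpanSingleton k[X] _ (topCoeff ha))
    fun p hp => by
      obtain ⟨q, rfl⟩ := Ideal.mem_span_singleton'.1 hp
      refine LinearMap.ext fun r => ?_
      obtain ⟨r, rfl⟩ := Ideal.Quotient.mk_surjective r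
      rw [LinearMap.toSpanSingleton_apply, smul_topCoeff_mk, mul_right_comm, coeff_mul_X_pow',
        if_neg (by omega), LinearMap.zero_apply]

theorem truncPolyDualityMap_mk_mk (ha : 0 < a) (p r : k[X]) :
    truncPolyDualityMap ha (Ideal.Quotient.mk _ p) (Ideal.Quotient.mk _ r) =
      (p * r).coeff (a - 1) :=
  rfl

theorem truncPolyDualityMap_injective (ha : 0 < a) :
    Function.Injective (truncPolyDualityMap (k := k) ha) := by
  refine (injective_iff_map_eq_zero _).2 fun z hz => ?_
  obtain ⟨p, rfl⟩ := Ideal.Quotient.mk_surjective z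
  refine Ideal.Quotient.eq_zero_iff_mem.2 <|
    Ideal.mem_span_singleton.2 <| X_pow_dvd_iff.2 fun d hd => ?_
  -- pairing with `X^(a-1-d)` reads off the coefficient of `X^d`
  have := LinearMap.congr_fun hz (Ideal.Quotient.mk _ (X ^ (a - 1 - d)))
  rwa [truncPolyDualityMap_mk_mk, coeff_mul_X_pow', if_pos (by omega),
    Nat.sub_sub_self (by omega)] at this

theorem truncPolyDualityMap_bijective (ha : 0 < a) :
    Function.Bijective (truncPolyDualityMap (k := k) ha) := by
  have hinj := truncPolyDualityMap_injective (k := k) ha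
  refine ⟨hinj, ?_⟩
  exact LinearMap.injective_iff_surjective_of_finrank_eq_finrank Subspace.dual_finrank_eq.symm
    (f := (truncPolyDualityMap (k := k) ha).restrictScalars k) |>.1 hinj

noncomputable def truncPolyDualEquiv (ha : 0 < a) :
    TruncPoly k a ≃ₗ[k[X]] Dual k (TruncPoly k a) :=
  LinearEquiv.ofBijective _ (truncPolyDualityMap_bijective ha)

end TruncatedPolynomial

theorem Ptn.parts_pos (l : Ptn) (i : Fin l.len) : 0 < l.parts i := by
  by_contra! h
  have hsub : {j | l.parts j ≠ 0} ⊆ Set.Iio (i : ℕ) := fun j hj => Set.mem_Iio.2 <| by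
    by_contra! hij
    exact hj (Nat.eq_zero_of_le_zero (h.trans' (l.antitone' hij)))
  have := Set.ncard_le_ncard hsub (Set.finite_Iio _)
  rw [Set.ncard_Iio_nat] at this
  exact absurd i.2 (not_lt.2 this)

section Imod

variable (k : Type*) [Field k] (l : Ptn)

noncomputable instance : Module k (Imod k l) :=
  inferInstanceAs (Module k (∀ i : Fin l.len, TruncPoly k (l.parts i)))

instance : IsScalarTower k k[X] (Imod k l) :=
  inferInstanceAs (IsScalarTower k k[X] (∀ i : Fin l.len, TruncPoly k (l.parts i)))

noncomputable def Imod.dualEquiv : Dual k (Imod k l) ≃ₗ[k[X]] Imod k l :=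
  ((LinearEquiv.piCongrRight fun i => truncPolyDualEquiv (l.parts_pos i)).trans
    (Module.piDualEquivDualPi _)).symm

end Imod

theorem hallNum_symm_general (k : Type) [Field k] (lam mu nu : Ptn) :
    hallNum k lam mu nu = hallNum k lam nu mu :=
  Nat.card_congr <| Classical.choice <| Function.Embedding.antisymm
    (Submodule.perpEmbedding (Imod.dualEquiv k lam) (Imod.dualEquiv k mu) (Imod.dualEquiv k nu))
    (Submodule.perpEmbedding (Imod.dualEquiv k lam) (Imod.dualEquiv k nu) (Imod.dualEquiv k mu))

/-- For every prime power `q` and all partitions `λ, μ, ν`, the Hall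
numbers satisfy `g^λ_{μ,ν} = g^λ_{ν,μ}`. -/
theorem hallNum_symm (q : ℕ) (hq : IsPrimePow q)
    (k : Type) [Field k] [Fintype k] (hk : Fintype.card k = q)
    (lam mu nu : Ptn) :
    hallNum k lam mu nu = hallNum k lam nu mu :=
  hallNum_symm_general k lam mu nu
end

section
/- Antipode identity: let q be a prime power (or any rational q with q ∉ {0, ±1}). For every partition λ with |λ| = n ≥ 1, Σ_{u=0}^{n} (−1)^u Σ_{ν: |ν| = n−u} q^{n(λ) − n(ν)} ∏_{i≥1} [λ'_i − λ'_{i+1} choose λ'_i − ν'_i]_{1/q} = 0, where the inner sum is over all partitions ν of n − u (the product vanishes by convention unless ν ⊆ λ and λ − ν is a vertical strip). (This identity is the combinatorial core of the formula S([I_{(1^n)}]) = (−1)^n q^{−n(n−1)/2} Σ_{|λ|=n} [I_λ] for the antipode of the classical Hall algebra.) -/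
open scoped BigOperators

/-!
Write `ν` through its column lengths `ν'_i`. The product over `i` vanishes unless
`λ'_{i+1} ≤ ν'_i ≤ λ'_i` for all `i`, and any column lengths in these boxes come from a
unique partition `ν`. As `|ν| = Σ ν'_i` and `n(ν) = Σ binom(ν'_i, 2)`, the signed sum then
factors into a product over the columns of `λ`. The last column has length `C = λ'_{λ_1} ≥ 1`
and `λ'_{λ_1 + 1} = 0`, so its factor is
`Σ_b (-1)^{C-b} q^{binom(C,2) - binom(b,2)} [C choose b]_{1/q} = ± q^{binom(C,2)} (1; 1/q)_C`
by the q-binomial theorem, and `(1; 1/q)_C = 0`.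
-/

open Finset

namespace Ptn

theorem ext {l m : Ptn} (h : l.parts = m.parts) : l = m := by
  cases l; cases m; cases h; rfl

theorem lt_conj_iff (l : Ptn) (i j : ℕ) : j < l.conj (i + 1) ↔ i < l.parts j := by
  have hex : ∃ k, l.parts k ≤ i := l.exists_zero.imp fun _ h => by omega
  have hset : {k | i + 1 ≤ l.parts k} = Set.Iio (Nat.find hex) := by
    ext k
    simp only [Set.mem_ofPred_eq, Set.mem_Iio, Nat.lt_find_iff, not_le, Nat.succ_le_iff]
    exact ⟨fun hk m hm => hk.trans_le (l.antitone' hm), fun h => h k le_rfl⟩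
  rw [conj, hset, Set.ncard_Iio_nat, Nat.lt_find_iff]
  exact ⟨fun h => not_le.mp (h j le_rfl),
    fun h m hm => not_le.mpr (h.trans_le (l.antitone' hm))⟩

theorem conj_succ_eq_zero_iff (l : Ptn) (i : ℕ) : l.conj (i + 1) = 0 ↔ l.parts 0 ≤ i := by
  have := l.lt_conj_iff i 0
  omega

theorem parts_eq_zero_iff (l : Ptn) (j : ℕ) : l.parts j = 0 ↔ l.conj 1 ≤ j := by
  have := l.lt_conj_iff 0 j
  rw [zero_add] at this
  omega

theorem eq_of_conj_eq {l m : Ptn} (h : ∀ i, l.conj (i + 1) = m.conj (i + 1)) : l = m :=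
  ext <| funext fun j => eq_of_forall_lt_iff fun i => by
    rw [← lt_conj_iff, ← lt_conj_iff, h]

noncomputable def transpose (l : Ptn) : Ptn where
  parts i := l.conj (i + 1)
  antitone' a b hab := by
    by_contra! h
    have := (l.lt_conj_iff a _).mpr (hab.trans_lt ((l.lt_conj_iff b _).mp h))
    omega
  exists_zero := ⟨l.parts 0, (l.conj_succ_eq_zero_iff _).mpr le_rfl⟩

theorem transpose_parts (l : Ptn) (i : ℕ) : l.transpose.parts i = l.conj (i + 1) := rfl

theorem conj_transpose (l : Ptn) (i : ℕ) : l.transpose.conj (i + 1) = l.parts i :=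
  eq_of_forall_lt_iff fun j => by rw [lt_conj_iff, transpose_parts, lt_conj_iff]

/-- Double counting of the cells of the diagram. -/
theorem finsum_mul_parts_eq_sum_conj (l : Ptn) (f : ℕ → ℕ) {M : ℕ} (hM : l.parts 0 ≤ M) :
    ∑ᶠ j, f j * l.parts j = ∑ i ∈ range M, ∑ j ∈ range (l.conj (i + 1)), f j := by
  have hsupp : Function.support (fun j => f j * l.parts j) ⊆ range (l.conj 1) := by
    intro j hj
    simpa using (l.parts_eq_zero_iff j).not.mp (right_ne_zero_of_mul hj)
  rw [finsum_eq_sum_of_support_subset _ hsupp]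
  calc ∑ j ∈ range (l.conj 1), f j * l.parts j
      = ∑ j ∈ range (l.conj 1), ∑ _i ∈ range (l.parts j), f j := by simp [mul_comm]
    _ = _ := Finset.sum_comm' fun j i => by
      have h0 := l.lt_conj_iff 0 j
      have hi := l.lt_conj_iff i j
      have hj := l.antitone' (Nat.zero_le j)
      simp only [mem_range, zero_add] at h0 ⊢
      omega

theorem size_eq_sum_conj (l : Ptn) {M : ℕ} (hM : l.parts 0 ≤ M) :
    l.size = ∑ i ∈ range M, l.conj (i + 1) := by
  simpa [size] using l.finsum_mul_parts_eq_sum_conj 1 hM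

theorem nstat_eq_sum_conj (l : Ptn) {M : ℕ} (hM : l.parts 0 ≤ M) :
    l.nstat = ∑ i ∈ range M, (l.conj (i + 1)).choose 2 :=
  (l.finsum_mul_parts_eq_sum_conj id hM).trans (by simp [sum_range_id, Nat.choose_two_right])

theorem parts_zero_le_size (l : Ptn) : l.parts 0 ≤ l.size := by
  rw [l.size_eq_sum_conj le_rfl]
  calc l.parts 0 = ∑ _i ∈ range (l.parts 0), 1 := by simp
    _ ≤ _ := sum_le_sum fun i hi => Nat.one_le_iff_ne_zero.mpr <| by
      rw [Ne, conj_succ_eq_zero_iff]; simpa using hi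

theorem conj_one_le_size (l : Ptn) : l.conj 1 ≤ l.size := by
  rcases Nat.eq_zero_or_pos (l.parts 0) with h | h
  · simp [(l.conj_succ_eq_zero_iff 0).mpr h.le]
  · rw [l.size_eq_sum_conj le_rfl]
    exact single_le_sum (f := fun i => l.conj (i + 1)) (fun _ _ => Nat.zero_le _)
      (mem_range.mpr h)

theorem finite_setOf_size_le (n : ℕ) : {l : Ptn | l.size ≤ n}.Finite := by
  refine Set.Finite.of_injOn (f := fun l (j : Fin (n + 1)) => l.parts j)
    (t := Set.univ.pi fun _ => Set.Iic n) ?_ ?_ (Set.Finite.pi fun _ => Set.finite_Iic n)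
  · intro l hl j _
    exact (l.antitone' (Nat.zero_le _)).trans (l.parts_zero_le_size.trans hl)
  · intro l (hl : l.size ≤ n) m (hm : m.size ≤ n) h
    refine ext (funext fun j => ?_)
    rcases lt_or_ge j (n + 1) with hj | hj
    · exact congrFun h ⟨j, hj⟩
    · rw [(l.parts_eq_zero_iff j).mpr (l.conj_one_le_size.trans (by omega)),
        (m.parts_eq_zero_iff j).mpr (m.conj_one_le_size.trans (by omega))]

noncomputable def sizeLe (n : ℕ) : Finset Ptn := (finite_setOf_size_le n).toFinset

theorem mem_sizeLe {l : Ptn} {n : ℕ} : l ∈ sizeLe n ↔ l.size ≤ n :=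
  Set.Finite.mem_toFinset _

end Ptn

section QBinomial

variable {K : Type*}

theorem qPoch_zero [CommRing K] (x t : K) : qPoch x t 0 = 1 :=
  prod_range_zero _

theorem qPoch_succ [CommRing K] (x t : K) (n : ℕ) :
    qPoch x t (n + 1) = qPoch x t n * (1 - x * t ^ n) :=
  prod_range_succ _ n

theorem qPoch_succ' [CommRing K] (x t : K) (n : ℕ) :
    qPoch x t (n + 1) = (1 - x) * qPoch (x * t) t n := by
  simp only [qPoch, prod_range_succ', pow_zero, mul_one, pow_succ', mul_assoc, mul_comm]

theorem qPoch_one_succ [CommRing K] (t : K) (n : ℕ) : qPoch 1 t (n + 1) = 0 := by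
  rw [qPoch_succ', sub_self, zero_mul]

theorem qPoch_self_ne_zero [Field K] {t : K} (ht : ¬IsOfFinOrder t) (n : ℕ) :
    qPoch t t n ≠ 0 :=
  prod_ne_zero_iff.mpr fun i _ h => ht <| isOfFinOrder_iff_pow_eq_one.mpr
    ⟨i + 1, i.succ_pos, by rw [pow_succ']; exact (sub_eq_zero.mp h).symm⟩

variable [Field K] {t : K}

theorem qBinom_zero_right (ht : ¬IsOfFinOrder t) (n : ℕ) : qBinom t n 0 = 1 := by
  rw [qBinom, if_pos n.zero_le, Nat.sub_zero, qPoch_zero, one_mul,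
    div_self (qPoch_self_ne_zero ht n)]

theorem qBinom_of_lt {n r : ℕ} (h : n < r) : qBinom t n r = 0 :=
  if_neg h.not_ge

theorem qBinom_sub {n r : ℕ} (h : r ≤ n) : qBinom t n (n - r) = qBinom t n r := by
  rw [qBinom, qBinom, if_pos (n.sub_le r), if_pos h, Nat.sub_sub_self h, mul_comm]

theorem qBinom_succ_succ (ht : ¬IsOfFinOrder t) (n k : ℕ) :
    qBinom t (n + 1) (k + 1) = t ^ (k + 1) * qBinom t n (k + 1) + qBinom t n k := by
  have hP := qPoch_self_ne_zero ht
  rcases lt_trichotomy k n with h | rfl | h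
  · obtain ⟨j, rfl⟩ := Nat.exists_eq_add_of_lt h
    simp only [qBinom, if_pos (by omega : k + 1 ≤ k + j + 1 + 1),
      if_pos (by omega : k + 1 ≤ k + j + 1), if_pos (by omega : k ≤ k + j + 1),
      show k + j + 1 + 1 - (k + 1) = j + 1 by omega,
      show k + j + 1 - (k + 1) = j by omega, show k + j + 1 - k = j + 1 by omega]
    have h1 := right_ne_zero_of_mul (qPoch_succ t t k ▸ hP (k + 1))
    have h2 := right_ne_zero_of_mul (qPoch_succ t t j ▸ hP (j + 1))
    have h3 := hP (k + j + 1)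
    rw [qPoch_succ t t (k + j + 1), qPoch_succ t t j, qPoch_succ t t k]
    field_simp
    ring
  · simp only [qBinom, if_pos le_rfl, if_neg (Nat.lt_succ_self k).not_ge, Nat.sub_self,
      qPoch_zero, mul_one, mul_zero, zero_add, div_self (hP _)]
  · rw [qBinom_of_lt (by omega), qBinom_of_lt (by omega), qBinom_of_lt h, mul_zero, add_zero]

theorem sum_qBinom_mul_pow (ht : ¬IsOfFinOrder t) (n : ℕ) (x : K) :
    ∑ a ∈ range (n + 1), qBinom t n a * t ^ a.choose 2 * (-x) ^ a = qPoch x t n := by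
  induction n generalizing x with
  | zero => simp [qBinom_zero_right ht, qPoch_zero]
  | succ n ih =>
    set A : ℕ → K := fun a => qBinom t n a * t ^ a.choose 2 * (-(x * t)) ^ a
    have hA : ∑ a ∈ range (n + 1), A (a + 1) = qPoch (x * t) t n - 1 := by
      have h := (sum_range_succ' A (n + 1)).symm.trans (sum_range_succ A (n + 1))
      simp only [A, qBinom_of_lt (Nat.lt_succ_self n), qBinom_zero_right ht,
        Nat.choose_zero_succ] at h
      rw [← ih]
      simp only [A]
      linear_combination h
    have hstep : ∀ a, qBinom t (n + 1) (a + 1) * t ^ (a + 1).choose 2 * (-x) ^ (a + 1) =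
        A (a + 1) + -x * A a := by
      intro a
      simp only [A, qBinom_succ_succ ht, Nat.choose_succ_succ' a 1, Nat.choose_one_right]
      ring
    rw [sum_range_succ', Finset.sum_congr rfl fun a _ => hstep a, sum_add_distrib, ← mul_sum,
      hA, ih, qPoch_succ', qBinom_zero_right ht, Nat.choose_zero_succ]
    ring

theorem qBinomZ_natCast (t : K) (n r : ℕ) : qBinomZ t n r = qBinom t n r := by
  by_cases h : r ≤ n
  · rw [qBinomZ, if_pos ⟨r.cast_nonneg, Nat.cast_le.mpr h⟩, qBinom, if_pos h,
      ← Nat.cast_sub h]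
    simp only [Int.toNat_natCast]
  · rw [qBinomZ, if_neg fun h' => h (Nat.cast_le.mp h'.2), qBinom, if_neg h]

theorem not_isOfFinOrder_inv {q : K} (hq : ¬IsOfFinOrder q) : ¬IsOfFinOrder q⁻¹ := by
  simp only [isOfFinOrder_iff_pow_eq_one, inv_pow, inv_eq_one] at hq ⊢
  exact hq

/-- The q-binomial theorem at `x = 1`, where `(1; t)_C` vanishes. -/
theorem sum_neg_one_pow_mul_qBinomZ_eq_zero {q : K} (hq : ¬IsOfFinOrder q) {C : ℕ}
    (hC : C ≠ 0) :
    ∑ b ∈ range (C + 1),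
      (-1) ^ (C - b) * (q ^ C.choose 2 / q ^ b.choose 2) * qBinomZ q⁻¹ C (C - b) = 0 := by
  have hterm : ∀ b ∈ range (C + 1),
      (-1) ^ (C - b) * (q ^ C.choose 2 / q ^ b.choose 2) * qBinomZ q⁻¹ C (C - b) =
        (-1) ^ C * q ^ C.choose 2 * (qBinom q⁻¹ C b * q⁻¹ ^ b.choose 2 * (-1) ^ b) := by
    intro b hb
    have hbC : b ≤ C := Nat.lt_succ_iff.mp (mem_range.mp hb)
    rw [← Nat.cast_sub hbC, qBinomZ_natCast, qBinom_sub hbC]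
    obtain ⟨d, rfl⟩ := Nat.exists_eq_add_of_le hbC
    have hsq : ((-1 : K) ^ b) ^ 2 = 1 := by rw [← pow_mul, pow_mul', neg_one_sq, one_pow]
    rw [Nat.add_sub_cancel_left, inv_pow, div_eq_mul_inv, pow_add]
    linear_combination (-(-1) ^ d * q ^ (b + d).choose 2 * qBinom q⁻¹ (b + d) b *
      (q ^ b.choose 2)⁻¹) * hsq
  obtain ⟨C, rfl⟩ := Nat.exists_eq_succ_of_ne_zero hC
  rw [sum_congr rfl hterm, ← mul_sum, sum_qBinom_mul_pow (not_isOfFinOrder_inv hq),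
    qPoch_one_succ, mul_zero]

end QBinomial

namespace Ptn

theorem sum_range_mul_finsum_size_eq {R : Type*} [Semiring R] (n : ℕ) (g : ℕ → R)
    (f : Ptn → R) :
    ∑ u ∈ range (n + 1), g u * ∑ᶠ (nu : Ptn) (_ : nu.size = n - u), f nu =
      ∑ nu ∈ sizeLe n, g (n - nu.size) * f nu := by
  rw [← sum_fiberwise_of_maps_to (g := fun nu => n - nu.size) (t := range (n + 1))
    (fun nu _ => mem_range.mpr (by omega)) fun nu => g (n - nu.size) * f nu]
  refine sum_congr rfl fun u hu => ?_
  rw [finsum_cond_eq_sum_of_cond_iff (t := (sizeLe n).filter fun nu => n - nu.size = u) _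
    fun {nu} _ => by rw [mem_filter, mem_sizeLe]; have := mem_range.mp hu; omega, mul_sum]
  exact sum_congr rfl fun nu hnu => by rw [(mem_filter.mp hnu).2]

/-- Column form of "`λ − ν` is a vertical strip". -/
def IsVerticalStrip (lam nu : Ptn) : Prop :=
  ∀ i, lam.conj (i + 2) ≤ nu.conj (i + 1) ∧ nu.conj (i + 1) ≤ lam.conj (i + 1)

variable {lam nu : Ptn}

theorem IsVerticalStrip.parts_zero_le (h : lam.IsVerticalStrip nu) :
    nu.parts 0 ≤ lam.parts 0 := by
  by_contra! hlt
  have h1 := (h (lam.parts 0)).2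
  have h2 := (lam.conj_succ_eq_zero_iff (lam.parts 0)).mpr le_rfl
  have h3 := (nu.conj_succ_eq_zero_iff (lam.parts 0)).not.mpr hlt.not_ge
  omega

theorem IsVerticalStrip.size_le (h : lam.IsVerticalStrip nu) : nu.size ≤ lam.size := by
  rw [nu.size_eq_sum_conj h.parts_zero_le, lam.size_eq_sum_conj le_rfl]
  exact sum_le_sum fun i _ => (h i).2

/-- A strip is determined by its first `λ_1` columns, and these may be chosen freely in the
boxes `[λ'_{i+1}, λ'_i]`. -/
theorem sum_filter_isVerticalStrip_eq_sum_piFinset {M : Type*} [AddCommMonoid M] (lam : Ptn)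
    [DecidablePred lam.IsVerticalStrip] (f : (Fin (lam.parts 0) → ℕ) → M) :
    ∑ nu ∈ (sizeLe lam.size).filter lam.IsVerticalStrip, f (fun i => nu.conj (i + 1)) =
      ∑ p ∈ Fintype.piFinset fun i : Fin (lam.parts 0) =>
        Icc (lam.conj (i + 2)) (lam.conj (i + 1)), f p := by
  set L := lam.parts 0
  have hlam (i : ℕ) (hi : L ≤ i) : lam.conj (i + 1) = 0 := (lam.conj_succ_eq_zero_iff i).mpr hi
  let c (p : Fin L → ℕ) (i : ℕ) : ℕ := if h : i < L then p ⟨i, h⟩ else 0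
  have hbox (p) (hp : p ∈ Fintype.piFinset fun i : Fin L =>
      Icc (lam.conj (i + 2)) (lam.conj (i + 1))) (i : ℕ) :
      lam.conj (i + 2) ≤ c p i ∧ c p i ≤ lam.conj (i + 1) := by
    simp only [c]
    split_ifs with h
    · exact mem_Icc.mp (Fintype.mem_piFinset.mp hp ⟨i, h⟩)
    · exact ⟨(hlam (i + 1) (by omega)).le, Nat.zero_le _⟩
  have hanti (p) (hp) : Antitone (c p) :=
    antitone_nat_of_succ_le fun i => (hbox p hp (i + 1)).2.trans (hbox p hp i).1
  refine sum_bij' (fun nu _ i => nu.conj (i + 1))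
    (fun p hp => (Ptn.mk (c p) (hanti p hp) ⟨L, by simp [c]⟩).transpose) ?_ ?_ ?_ ?_
    fun _ _ => rfl
  · intro nu hnu
    exact Fintype.mem_piFinset.mpr fun i => mem_Icc.mpr ((mem_filter.mp hnu).2 i)
  · intro p hp
    have hstrip : lam.IsVerticalStrip (Ptn.mk (c p) (hanti p hp) ⟨L, by simp [c]⟩).transpose :=
      fun i => by rw [conj_transpose]; exact hbox p hp i
    exact mem_filter.mpr ⟨mem_sizeLe.mpr hstrip.size_le, hstrip⟩
  · intro nu hnu
    refine eq_of_conj_eq fun i => ?_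
    rw [conj_transpose]
    simp only [c]
    split_ifs with h
    · rfl
    · have := ((mem_filter.mp hnu).2 i).2
      rw [hlam i (by omega)] at this
      omega
  · intro p hp
    funext i
    rw [conj_transpose]
    simp [c, L]

variable {K : Type*} [Field K]

theorem mulSupport_qBinomZ_conj_subset (t : K) (lam nu : Ptn) :
    Function.mulSupport (fun i => qBinomZ t
      ((lam.conj (i + 1) : ℤ) - (lam.conj (i + 2) : ℤ))
      ((lam.conj (i + 1) : ℤ) - (nu.conj (i + 1) : ℤ))) ⊆
        range (max (lam.parts 0) (nu.parts 0)) := by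
  intro i hi
  by_contra hiM
  simp only [coe_range, Set.mem_Iio, not_lt, max_le_iff] at hiM
  apply hi
  dsimp only
  rw [(lam.conj_succ_eq_zero_iff i).mpr hiM.1,
    (lam.conj_succ_eq_zero_iff (i + 1)).mpr (by omega), (nu.conj_succ_eq_zero_iff i).mpr hiM.2]
  simp [qBinomZ, qPoch_zero]

theorem finprod_qBinomZ_conj_eq_zero (t : K) (h : ¬lam.IsVerticalStrip nu) :
    ∏ᶠ i : ℕ, qBinomZ t
      ((lam.conj (i + 1) : ℤ) - (lam.conj (i + 2) : ℤ))
      ((lam.conj (i + 1) : ℤ) - (nu.conj (i + 1) : ℤ)) = 0 := by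
  obtain ⟨i, hi⟩ : ∃ i, ¬(lam.conj (i + 2) ≤ nu.conj (i + 1) ∧
      nu.conj (i + 1) ≤ lam.conj (i + 1)) := not_forall.mp h
  refine finprod_eq_zero _ i ?_
    ((finite_toSet _).subset (mulSupport_qBinomZ_conj_subset t lam nu))
  rw [qBinomZ, if_neg]
  omega

theorem IsVerticalStrip.finprod_qBinomZ_conj (t : K) (h : lam.IsVerticalStrip nu) :
    ∏ᶠ i : ℕ, qBinomZ t
      ((lam.conj (i + 1) : ℤ) - (lam.conj (i + 2) : ℤ))
      ((lam.conj (i + 1) : ℤ) - (nu.conj (i + 1) : ℤ)) =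
    ∏ i ∈ range (lam.parts 0), qBinomZ t
      ((lam.conj (i + 1) : ℤ) - (lam.conj (i + 2) : ℤ))
      ((lam.conj (i + 1) : ℤ) - (nu.conj (i + 1) : ℤ)) :=
  finprod_eq_prod_of_mulSupport_subset _ <| (mulSupport_qBinomZ_conj_subset t lam nu).trans <| by
    rw [max_eq_left h.parts_zero_le]

/-- The contribution of the `(i+1)`-st column of a strip `ν` of length `b` to its term. -/
noncomputable def columnTerm (q : K) (lam : Ptn) (i b : ℕ) : K :=
  (-1) ^ (lam.conj (i + 1) - b) * (q ^ (lam.conj (i + 1)).choose 2 / q ^ b.choose 2) *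
    qBinomZ q⁻¹ ((lam.conj (i + 1) : ℤ) - (lam.conj (i + 2) : ℤ))
      ((lam.conj (i + 1) : ℤ) - (b : ℤ))

theorem IsVerticalStrip.term_eq_prod_columnTerm {q : K} (hq : q ≠ 0)
    (h : lam.IsVerticalStrip nu) :
    (-1) ^ (lam.size - nu.size) * (q ^ ((lam.nstat : ℤ) - (nu.nstat : ℤ)) *
      ∏ᶠ i : ℕ, qBinomZ q⁻¹
        ((lam.conj (i + 1) : ℤ) - (lam.conj (i + 2) : ℤ))
        ((lam.conj (i + 1) : ℤ) - (nu.conj (i + 1) : ℤ))) =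
    ∏ i ∈ range (lam.parts 0), columnTerm q lam i (nu.conj (i + 1)) := by
  have hnu := h.parts_zero_le
  rw [h.finprod_qBinomZ_conj, zpow_sub₀ hq, zpow_natCast, zpow_natCast,
    lam.size_eq_sum_conj le_rfl, nu.size_eq_sum_conj hnu, lam.nstat_eq_sum_conj le_rfl,
    nu.nstat_eq_sum_conj hnu, ← sum_tsub_distrib _ fun i _ => (h i).2, ← prod_pow_eq_pow_sum,
    ← prod_pow_eq_pow_sum, ← prod_pow_eq_pow_sum, ← prod_div_distrib, ← prod_mul_distrib,
    ← prod_mul_distrib]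
  simp only [columnTerm, mul_assoc]

theorem sum_columnTerm_last_eq_zero {q : K} (hq : ¬IsOfFinOrder q) {m : ℕ}
    (hm : lam.parts 0 = m + 1) :
    ∑ b ∈ Icc (lam.conj (m + 2)) (lam.conj (m + 1)), columnTerm q lam m b = 0 := by
  have hC : lam.conj (m + 1) ≠ 0 := by rw [Ne, conj_succ_eq_zero_iff]; omega
  have hlast : lam.conj (m + 2) = 0 := (lam.conj_succ_eq_zero_iff (m + 1)).mpr hm.le
  rw [hlast, ← Nat.range_succ_eq_Icc_zero]
  simpa [columnTerm, hlast] using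
    sum_neg_one_pow_mul_qBinomZ_eq_zero hq hC

end Ptn

theorem not_isOfFinOrder_of_ne_one_of_ne_neg_one {R : Type*} [Ring R] [LinearOrder R]
    [IsStrictOrderedRing R] {a : R} (h1 : a ≠ 1) (hm1 : a ≠ -1) : ¬IsOfFinOrder a := by
  rw [isOfFinOrder_iff_pow_eq_one]
  rintro ⟨n, hn, h⟩
  rcases (pow_eq_one_iff_of_ne_zero hn.ne').mp h with h | h
  exacts [h1 h, hm1 h.1]

open Ptn in
theorem antipode_sum_eq_zero {K : Type*} [Field K] {q : K} (hq0 : q ≠ 0)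
    (hq : ¬IsOfFinOrder q) {lam : Ptn} (hlam : lam.size ≠ 0) :
    ∑ u ∈ range (lam.size + 1), (-1 : K) ^ u *
      ∑ᶠ (nu : Ptn) (_ : nu.size = lam.size - u),
        q ^ ((lam.nstat : ℤ) - (nu.nstat : ℤ)) *
          ∏ᶠ i : ℕ, qBinomZ q⁻¹
            ((lam.conj (i + 1) : ℤ) - (lam.conj (i + 2) : ℤ))
            ((lam.conj (i + 1) : ℤ) - (nu.conj (i + 1) : ℤ))
      = 0 := by
  classical
  obtain ⟨m, hm⟩ : ∃ m, lam.parts 0 = m + 1 :=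
    Nat.exists_eq_succ_of_ne_zero fun h => hlam (by simp [lam.size_eq_sum_conj h.le])
  rw [sum_range_mul_finsum_size_eq, ← sum_filter_of_ne (p := lam.IsVerticalStrip)
    fun nu _ hne => by_contra fun h => hne <| by rw [finprod_qBinomZ_conj_eq_zero _ h]; simp,
    sum_congr rfl fun nu hnu => (mem_filter.mp hnu).2.term_eq_prod_columnTerm hq0]
  simp_rw [prod_range fun i => columnTerm q lam i _]
  rw [sum_filter_isVerticalStrip_eq_sum_piFinset lam
    fun p => ∏ i : Fin (lam.parts 0), columnTerm q lam i (p i), ← prod_univ_sum]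
  exact prod_eq_zero (mem_univ ⟨m, by omega⟩) (sum_columnTerm_last_eq_zero hq hm)

/-- antipode identity: for any rational `q ∉ {0, ±1}` and any partition
`λ` with `|λ| = n ≥ 1`,
`Σ_{u=0}^{n} (−1)^u Σ_{|ν| = n−u} q^{n(λ)−n(ν)} ∏_{i≥1} [λ'ᵢ−λ'_{i+1} choose λ'ᵢ−ν'ᵢ]_{1/q} = 0`
(the product vanishes by convention unless `ν ⊆ λ` and `λ − ν` is a vertical strip). -/
theorem antipode_identity (q : ℚ) (hq0 : q ≠ 0) (hq1 : q ≠ 1) (hqm1 : q ≠ -1)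
    (n : ℕ) (hn : 1 ≤ n) (lam : Ptn) (hlam : lam.size = n) :
    ∑ u ∈ Finset.range (n + 1), (-1 : ℚ) ^ u *
      ∑ᶠ (nu : Ptn) (_ : nu.size = n - u),
        q ^ ((lam.nstat : ℤ) - (nu.nstat : ℤ)) *
          ∏ᶠ i : ℕ, qBinomZ q⁻¹
            ((lam.conj (i + 1) : ℤ) - (lam.conj (i + 2) : ℤ))
            ((lam.conj (i + 1) : ℤ) - (nu.conj (i + 1) : ℤ))
      = 0 := by
  subst hlam
  exact antipode_sum_eq_zero hq0 (not_isOfFinOrder_of_ne_one_of_ne_neg_one hq1 hqm1) (by omega)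
end
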